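/- arXiv:1906.05796 — 6 statements merged into one kernel-verified Lean document; each statement's English description precedes it below -/
import Mathlib

section
/- For every prime p, the infinite product ∏_{k=1}^{∞} (1 + 1/(p + p² + ⋯ + p^k)) converges and equals p/(p−1). -/
/-!
Write `G N = ∑_{i ≤ N} p⁻ⁱ`. Since `p + ⋯ + p^(N+1) = p^(N+1) G N`, the `N`-th factor satisfies
`G N * (1 + 1 / (p + ⋯ + p^(N+1))) = G N + p^(-(N+1)) = G (N+1)`, so the partial products
telescope to the partial sums of the geometric series `∑ p⁻ⁱ = p / (p - 1)`.
-/

open Filter Topology Finset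

theorem Real.hasProd_of_one_le_of_tendsto_prod_range {f : ℕ → ℝ} {a : ℝ} (hf : ∀ n, 1 ≤ f n)
    (h : Tendsto (fun n ↦ ∏ i ∈ range n, f i) atTop (𝓝 a)) : HasProd f a := by
  have ha : 0 < a := one_pos.trans_le <| ge_of_tendsto' h fun n ↦ one_le_prod fun i _ ↦ hf i
  have hf₀ : ∀ n, 0 < f n := fun n ↦ one_pos.trans_le (hf n)
  have hlog : HasSum (fun n ↦ log (f n)) (log a) := by
    rw [hasSum_iff_tendsto_nat_of_nonneg fun n ↦ log_nonneg (hf n)]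
    simpa only [← log_prod fun i _ ↦ (hf₀ i).ne'] using h.log ha.ne'
  simpa only [exp_log ha] using hasProd_of_hasSum_log hf₀ hlog

theorem sum_Icc_one_pow_eq_pow_mul_sum_range_inv_pow {K : Type*} [DivisionRing K] {x : K}
    (hx : x ≠ 0) (n : ℕ) : ∑ i ∈ Icc 1 n, x ^ i = x ^ n * ∑ i ∈ range n, x⁻¹ ^ i := by
  induction n with
  | zero => simp
  | succ n ih =>
    rw [sum_Icc_succ_top (by omega), ih, sum_range_succ', pow_succ, mul_add, mul_sum, mul_sum]
    simp only [pow_succ', mul_assoc, mul_inv_cancel_left₀ hx, pow_zero, mul_one]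

theorem prod_range_one_add_inv_geom_sum {x : ℝ} (hx : 0 < x) (N : ℕ) :
    ∏ k ∈ range N, (1 + 1 / ∑ i ∈ Icc 1 (k + 1), x ^ i) = ∑ i ∈ range (N + 1), x⁻¹ ^ i := by
  induction N with
  | zero => simp
  | succ N ih =>
    have hG : 0 < ∑ i ∈ range (N + 1), x⁻¹ ^ i := by positivity
    rw [prod_range_succ, ih, sum_Icc_one_pow_eq_pow_mul_sum_range_inv_pow hx.ne',
      sum_range_succ _ (N + 1), mul_one_add, inv_pow]
    field_simp

theorem hasProd_one_add_inv_geom_sum {x : ℝ} (hx : 1 < x) :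
    HasProd (fun k : ℕ ↦ 1 + 1 / ∑ i ∈ Icc 1 (k + 1), x ^ i) (x / (x - 1)) := by
  have hx₀ : 0 < x := one_pos.trans hx
  refine Real.hasProd_of_one_le_of_tendsto_prod_range (fun k ↦ ?_) ?_
  · exact le_add_of_nonneg_right (by positivity)
  · have hgeom := (hasSum_geometric_of_lt_one (inv_nonneg.2 hx₀.le)
      (inv_lt_one_of_one_lt₀ hx)).tendsto_sum_nat.comp (tendsto_add_atTop_nat 1)
    simp only [prod_range_one_add_inv_geom_sum hx₀]
    rwa [show x / (x - 1) = (1 - x⁻¹)⁻¹ by field_simp]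

theorem prod_one_add_inv_geom_sum' (p : ℕ) (hp : p.Prime) :
    HasProd (fun k : ℕ => 1 + 1 / ∑ i ∈ Finset.Icc 1 (k + 1), (p : ℝ) ^ i)
      ((p : ℝ) / ((p : ℝ) - 1)) :=
  hasProd_one_add_inv_geom_sum (by exact_mod_cast hp.one_lt)
end

section
/- Let m ≥ 1 and let δ₁ ≥ δ₂ ≥ ⋯ be the values log(1 + 1/z) for z ∈ Z = {q + ⋯ + q^k : q prime, k ≥ 1} listed in decreasing order (counted with multiplicity over pairs (q,k)). If n_m = ∏_p p^{k_p} where k_p is the number of indices i ≤ m whose pair has first coordinate p, then for every integer n ≥ 2 whose total number of prime factors counted with multiplicity equals m, σ(n_m)/n_m ≥ σ(n)/n. -/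
/-! Each factor `σ(p^k)/p^k` of the multiplicative function `σ(n)/n` telescopes into
`∏_{j ≤ k} exp δ_{p,j}`, so `σ(n)/n` is the product of `exp δ` over the `Ω(n)` pairs `(p, j)`
with `1 ≤ j ≤ v_p(n)`. As the enumeration lists the values `δ` in decreasing order, any `m` pairs
contribute at most the first `m`. Conversely the first `m` pairs contain, for each prime `p`,
`v_p(n_m)` distinct exponents, and since `δ_{p,j}` decreases in `j` their contribution is at most
that of `j = 1, …, v_p(n_m)`, which is `σ(p^{v_p(n_m)})/p^{v_p(n_m)}`. -/

open Finset ArithmeticFunction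

section Antitone

variable {R : Type*} [CommSemiring R] [PartialOrder R] [IsOrderedRing R]

theorem Finset.prod_le_prod_range_card_of_antitone {f : ℕ → R} (hf0 : ∀ i, 0 ≤ f i)
    (hf : Antitone f) (s : Finset ℕ) : ∏ i ∈ s, f i ≤ ∏ i ∈ range #s, f i := by
  classical
  induction s using Finset.induction_on_max with
  | empty => simp
  | insert a s ha ih =>
    have has : a ∉ s := fun h => (ha a h).false
    have hcard : #s ≤ a := by
      simpa using card_le_card (fun x hx => mem_range.2 (ha x hx) : s ⊆ range a)
    rw [prod_insert has, card_insert_of_notMem has, prod_range_succ, mul_comm (f a)]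
    exact mul_le_mul ih (hf hcard) (hf0 a) (prod_nonneg fun i _ => hf0 i)

theorem Finset.prod_le_prod_range_card_of_antitone_comp {α : Type*} {u : ℕ → α}
    (hu : u.Injective) {F : α → R} (hF0 : ∀ i, 0 ≤ F (u i)) (hF : Antitone (F ∘ u))
    {s : Finset α} (hs : ↑s ⊆ Set.range u) :
    ∏ x ∈ s, F x ≤ ∏ i ∈ range #s, F (u i) := by
  classical
  have hcard : #(s.preimage u hu.injOn) = #s := by
    rw [card_preimage, filter_true_of_mem fun x hx => hs hx]
  rw [← prod_preimage u s hu.injOn F fun x hx hx' => (hx' (hs hx)).elim, ← hcard]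
  exact prod_le_prod_range_card_of_antitone hF0 hF _

end Antitone

@[to_additive]
theorem Finset.prod_range_succ_eq_prod_Icc {M : Type*} [CommMonoid M] (f : ℕ → M) (k : ℕ) :
    ∏ i ∈ range k, f (i + 1) = ∏ i ∈ Icc 1 k, f i := by
  rw [range_eq_Ico, prod_Ico_add', zero_add, Ico_add_one_right_eq_Icc]

noncomputable def abundancy (n : ℕ) : ℝ := sigma 1 n / n

/-- The factor by which `abundancy` grows when the exponent of `p` rises from `k - 1` to `k`;
its logarithm is the paper's `δ_{p,k}`. -/
noncomputable def abundancyStep (p k : ℕ) : ℝ := 1 + 1 / ∑ t ∈ Icc 1 k, (p : ℝ) ^ t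

theorem abundancyStep_pos (p k : ℕ) : 0 < abundancyStep p k := by
  unfold abundancyStep
  positivity

theorem antitone_abundancyStep_succ {p : ℕ} (hp : 0 < p) :
    Antitone fun j => abundancyStep p (j + 1) := by
  refine antitone_nat_of_succ_le fun j => ?_
  unfold abundancyStep
  gcongr
  · exact sum_pos (fun t _ => by positivity) ⟨1, by simp⟩
  · omega

theorem abundancy_prime_pow_succ {p : ℕ} (hp : p.Prime) (k : ℕ) :
    abundancy (p ^ (k + 1)) = abundancy (p ^ k) * abundancyStep p (k + 1) := by
  set A := ∑ t ∈ range (k + 1), (p : ℝ) ^ t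
  have hσ : ∀ j, (sigma 1 (p ^ j) : ℝ) = ∑ t ∈ range (j + 1), (p : ℝ) ^ t := fun j => by
    rw [sigma_one_apply_prime_pow hp]; push_cast; rfl
  have hS : ∑ t ∈ Icc 1 (k + 1), (p : ℝ) ^ t = p * A := by
    rw [← sum_range_succ_eq_sum_Icc, mul_sum]; simp only [pow_succ']
  have hp0 : (0 : ℝ) < p := by exact_mod_cast hp.pos
  have hA : 0 < A := sum_pos (fun t _ => by positivity) ⟨0, by simp⟩
  have hσ' : ∑ t ∈ range (k + 1 + 1), (p : ℝ) ^ t = 1 + p * A := by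
    rw [sum_range_succ', mul_sum, add_comm]; simp only [pow_succ', pow_zero]
  simp only [abundancy, abundancyStep, hσ, hS, hσ']
  push_cast
  field_simp
  ring

theorem abundancy_prime_pow {p : ℕ} (hp : p.Prime) (k : ℕ) :
    abundancy (p ^ k) = ∏ j ∈ Icc 1 k, abundancyStep p j := by
  induction k with
  | zero => simp [abundancy]
  | succ k ih => rw [abundancy_prime_pow_succ hp, ih, prod_Icc_succ_top (by omega)]

theorem abundancy_eq_prod_of_primeFactors_subset {n : ℕ} (hn : n ≠ 0) {S : Finset ℕ}
    (hS : n.primeFactors ⊆ S) : abundancy n = ∏ p ∈ S, abundancy (p ^ n.factorization p) := by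
  have hσ : sigma 1 n = ∏ p ∈ S, sigma 1 (p ^ n.factorization p) := by
    rw [isMultiplicative_sigma.multiplicative_factorization _ hn]
    exact Finsupp.prod_of_support_subset _ hS _ fun _ _ => by simp
  have hn' : n = ∏ p ∈ S, p ^ n.factorization p := by
    conv_lhs => rw [← Nat.prod_factorization_pow_eq_self hn]
    exact Finsupp.prod_of_support_subset _ hS _ fun _ _ => by simp
  simp only [abundancy]
  rw [prod_div_distrib]
  congr 1
  · exact_mod_cast hσ
  · exact_mod_cast hn'

def exponentPairs (n : ℕ) : Finset (ℕ × ℕ) :=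
  n.primeFactors.biUnion fun p => {p} ×ˢ Icc 1 (n.factorization p)

theorem pairwiseDisjoint_exponentPairs (n : ℕ) :
    (n.primeFactors : Set ℕ).PairwiseDisjoint fun p => {p} ×ˢ Icc 1 (n.factorization p) :=
  fun _ _ _ _ h => disjoint_product.2 (Or.inl (disjoint_singleton.2 h))

theorem mem_exponentPairs {n : ℕ} {x : ℕ × ℕ} (hx : x ∈ exponentPairs n) :
    x.1.Prime ∧ 1 ≤ x.2 := by
  simp only [exponentPairs, mem_biUnion, mem_product, mem_singleton, mem_Icc] at hx
  obtain ⟨p, hp, rfl, hx, -⟩ := hx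
  exact ⟨Nat.prime_of_mem_primeFactors hp, hx⟩

theorem card_exponentPairs (n : ℕ) : #(exponentPairs n) = cardFactors n := by
  rw [exponentPairs, card_biUnion (pairwiseDisjoint_exponentPairs n),
    cardFactors_eq_sum_factorization, Finsupp.sum]
  simp

theorem prod_exponentPairs {n : ℕ} (hn : n ≠ 0) :
    ∏ x ∈ exponentPairs n, abundancyStep x.1 x.2 = abundancy n := by
  rw [exponentPairs, prod_biUnion (pairwiseDisjoint_exponentPairs n),
    abundancy_eq_prod_of_primeFactors_subset hn subset_rfl]
  refine prod_congr rfl fun p hp => ?_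
  rw [prod_product, prod_singleton, abundancy_prime_pow (Nat.prime_of_mem_primeFactors hp)]

theorem factorization_prod_fst {Q : Finset (ℕ × ℕ)} (hQ : ∀ x ∈ Q, x.1.Prime) (p : ℕ) :
    (∏ x ∈ Q, x.1).factorization p = #{x ∈ Q | x.1 = p} := by
  rw [Nat.factorization_prod fun x hx => (hQ x hx).ne_zero, Finsupp.finsetSum_apply,
    card_filter]
  exact sum_congr rfl fun x hx => by rw [(hQ x hx).factorization, Finsupp.single_apply]

theorem primeFactors_prod_fst_subset {Q : Finset (ℕ × ℕ)} (hQ : ∀ x ∈ Q, x.1.Prime) :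
    (∏ x ∈ Q, x.1).primeFactors ⊆ Q.image Prod.fst := by
  intro p hp
  rw [← Nat.support_factorization, Finsupp.mem_support_iff, factorization_prod_fst hQ,
    Ne, card_eq_zero, ← not_nonempty_iff_eq_empty, not_not] at hp
  obtain ⟨x, hx⟩ := hp
  exact mem_image.2 ⟨x, (mem_filter.1 hx).1, (mem_filter.1 hx).2⟩

theorem prod_abundancyStep_le_abundancy (Q : Finset (ℕ × ℕ))
    (hQ : ∀ x ∈ Q, x.1.Prime ∧ 1 ≤ x.2) :
    ∏ x ∈ Q, abundancyStep x.1 x.2 ≤ abundancy (∏ x ∈ Q, x.1) := by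
  classical
  have hQ₁ : ∀ x ∈ Q, x.1.Prime := fun x hx => (hQ x hx).1
  have hN : ∏ x ∈ Q, x.1 ≠ 0 := prod_ne_zero_iff.2 fun x hx => (hQ₁ x hx).ne_zero
  rw [abundancy_eq_prod_of_primeFactors_subset hN (primeFactors_prod_fst_subset hQ₁),
    ← prod_fiberwise_of_maps_to fun x hx => mem_image_of_mem Prod.fst hx]
  refine prod_le_prod (fun p _ => prod_nonneg fun x _ => (abundancyStep_pos _ _).le)
    fun p hp => ?_
  obtain ⟨y, hy, rfl⟩ := mem_image.1 hp
  have hsub : ↑{x ∈ Q | x.1 = y.1} ⊆ Set.range fun j => (y.1, j + 1) := by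
    intro x hx
    obtain ⟨hxQ, hxy⟩ := mem_filter.1 hx
    exact ⟨x.2 - 1, Prod.ext hxy.symm (Nat.sub_add_cancel (hQ x hxQ).2)⟩
  rw [factorization_prod_fst hQ₁, abundancy_prime_pow (hQ₁ y hy), ← prod_range_succ_eq_prod_Icc]
  exact prod_le_prod_range_card_of_antitone_comp (u := fun j => (y.1, j + 1))
    (F := fun x => abundancyStep x.1 x.2) (fun i j h => by simpa using h)
    (fun _ => (abundancyStep_pos _ _).le) (antitone_abundancyStep_succ (hQ₁ y hy).pos) hsub

theorem LR_number_maximizes_rho_general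
    (e : ℕ ≃ {x : ℕ × ℕ // x.1.Prime ∧ 1 ≤ x.2})
    (hanti : ∀ i j : ℕ, i ≤ j →
      Real.log (1 + 1 / ∑ t ∈ Finset.Icc 1 (e j).1.2, ((e j).1.1 : ℝ) ^ t) ≤
        Real.log (1 + 1 / ∑ t ∈ Finset.Icc 1 (e i).1.2, ((e i).1.1 : ℝ) ^ t))
    (m : ℕ) (n : ℕ) (hn : 2 ≤ n)
    (hΩ : cardFactors n = m) :
    (sigma 1 n : ℝ) / (n : ℝ) ≤
      (sigma 1 (∏ i ∈ Finset.range m, (e i).1.1) : ℝ) /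
        ((∏ i ∈ Finset.range m, (e i).1.1 : ℕ) : ℝ) := by
  set u : ℕ → ℕ × ℕ := fun i => (e i).1
  have hu : u.Injective := Subtype.val_injective.comp e.injective
  have hstep : Antitone fun i => abundancyStep (u i).1 (u i).2 := fun i j hij =>
    (Real.log_le_log_iff (abundancyStep_pos _ _) (abundancyStep_pos _ _)).1 (hanti i j hij)
  have hpairs : ↑(exponentPairs n) ⊆ Set.range u := fun x hx =>
    ⟨e.symm ⟨x, mem_exponentPairs hx⟩, by simp [u]⟩
  show abundancy n ≤ abundancy (∏ i ∈ range m, (u i).1)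
  calc abundancy n = ∏ x ∈ exponentPairs n, abundancyStep x.1 x.2 :=
        (prod_exponentPairs (by omega)).symm
    _ ≤ ∏ i ∈ range m, abundancyStep (u i).1 (u i).2 := by
        have := prod_le_prod_range_card_of_antitone_comp hu
          (F := fun x => abundancyStep x.1 x.2) (fun _ => (abundancyStep_pos _ _).le) hstep hpairs
        rwa [card_exponentPairs, hΩ] at this
    _ = ∏ x ∈ (range m).image u, abundancyStep x.1 x.2 := by rw [prod_image hu.injOn]
    _ ≤ abundancy (∏ x ∈ (range m).image u, x.1) :=
        prod_abundancyStep_le_abundancy _ fun x hx => by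
          obtain ⟨i, -, rfl⟩ := mem_image.1 hx
          exact (e i).2
    _ = abundancy (∏ i ∈ range m, (u i).1) := by rw [prod_image hu.injOn]

theorem LR_number_maximizes_rho
    (e : ℕ ≃ {x : ℕ × ℕ // x.1.Prime ∧ 1 ≤ x.2})
    (hanti : ∀ i j : ℕ, i ≤ j →
      Real.log (1 + 1 / ∑ t ∈ Finset.Icc 1 (e j).1.2, ((e j).1.1 : ℝ) ^ t) ≤
        Real.log (1 + 1 / ∑ t ∈ Finset.Icc 1 (e i).1.2, ((e i).1.1 : ℝ) ^ t))
    (m : ℕ) (hm : 1 ≤ m) (n : ℕ) (hn : 2 ≤ n)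
    (hΩ : cardFactors n = m) :
    (sigma 1 n : ℝ) / (n : ℝ) ≤
      (sigma 1 (∏ i ∈ Finset.range m, (e i).1.1) : ℝ) /
        ((∏ i ∈ Finset.range m, (e i).1.1 : ℕ) : ℝ) :=
  LR_number_maximizes_rho_general e hanti m n hn hΩ
end

section
/- With W₁ = ∑_{(q,k)} (1/z_{q,k} − log(1 + 1/z_{q,k})) where z_{q,k} = q + ⋯ + q^k, and W₂ = M + ∑_{(q,k), k≥2} 1/z_{q,k} where M is the Meissel–Mertens constant, one has −W₁ + W₂ = γ (the Euler–Mascheroni constant). -/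
/-! For a fixed prime `p` put `x = 1 / p`. Since `(p - 1) z_{p,k} = p^{k+1} - p`, one has
`1 + 1 / z_{p,k} = (1 - x^{k+1}) / (1 - x^k)`, so `∑_{k ≥ 1} log (1 + 1 / z_{p,k})` telescopes
to `-log (1 - 1 / p)`. Hence the `p`-fibre of `W₁` is
`1 / p + log (1 - 1 / p) + ∑_{k ≥ 2} 1 / z_{p,k}`.
Both double series converge absolutely, their terms being `O(p⁻² 2⁻ᵏ)`, so they may be summed
fibrewise, and summing over `p` gives `W₁ = W₂ - γ`. -/

/-- The real value `q + q^2 + ⋯ + q^k` attached to a pair `(q, k)`. -/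
noncomputable def zval (x : ℕ × ℕ) : ℝ := ∑ t ∈ Finset.Icc 1 x.2, (x.1 : ℝ) ^ t

open Filter Topology Real

lemma zval_one (p : ℕ) : zval (p, 1) = p := by simp [zval]

lemma zval_succ (p k : ℕ) : zval (p, k + 1) = zval (p, k) + (p : ℝ) ^ (k + 1) := by
  simp [zval, Finset.sum_Icc_succ_top (Nat.le_add_left 1 k)]

lemma sub_one_mul_zval (p k : ℕ) : ((p : ℝ) - 1) * zval (p, k) = (p : ℝ) ^ (k + 1) - p := by
  induction k with
  | zero => simp [zval]
  | succ k ih => rw [zval_succ, mul_add, ih]; ring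

lemma zval_nonneg (x : ℕ × ℕ) : 0 ≤ zval x := Finset.sum_nonneg fun _ _ => by positivity

lemma pow_le_zval (p : ℕ) {k : ℕ} (hk : k ≠ 0) : (p : ℝ) ^ k ≤ zval (p, k) :=
  Finset.single_le_sum (fun t _ => by positivity)
    (Finset.mem_Icc.2 ⟨Nat.one_le_iff_ne_zero.2 hk, le_rfl⟩)

lemma zval_pos {p k : ℕ} (hp : 0 < p) (hk : k ≠ 0) : 0 < zval (p, k) :=
  (pow_pos (by exact_mod_cast hp) k).trans_le (pow_le_zval p hk)

lemma one_div_zval_le {p : ℕ} (hp : 0 < p) (k : ℕ) :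
    1 / zval (p, k) ≤ (p : ℝ)⁻¹ ^ k := by
  rcases eq_or_ne k 0 with rfl | hk
  · simp [zval] -- `zval (p, 0) = 0`, and `1 / 0 = 0`
  · rw [inv_pow, ← one_div]
    exact one_div_le_one_div_of_le (by positivity) (pow_le_zval p hk)

lemma one_add_one_div_zval {p k : ℕ} (hp : 1 < p) (hk : k ≠ 0) :
    1 + 1 / zval (p, k) = (1 - (p : ℝ)⁻¹ ^ (k + 1)) / (1 - (p : ℝ)⁻¹ ^ k) := by
  have hp' : (1 : ℝ) < p := by exact_mod_cast hp
  have hz := zval_pos (p := p) (by omega) hk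
  have hpk : (p : ℝ) ^ k - 1 ≠ 0 := (sub_pos.2 (one_lt_pow₀ hp' hk)).ne'
  rw [inv_pow, inv_pow]
  field_simp
  linear_combination (-((p : ℝ) ^ k)) * sub_one_mul_zval p k

lemma summable_one_div_zval {p : ℕ} (hp : 1 < p) : Summable fun k => 1 / zval (p, k) := by
  have hp' : (1 : ℝ) < p := by exact_mod_cast hp
  exact .of_nonneg_of_le (fun k => one_div_nonneg.2 (zval_nonneg _))
    (one_div_zval_le (by omega))
    (summable_geometric_of_lt_one (by positivity) (inv_lt_one_of_one_lt₀ hp'))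

lemma hasSum_log_one_add_one_div_zval {p : ℕ} (hp : 1 < p) :
    HasSum (fun k => log (1 + 1 / zval (p, k + 1))) (-log (1 - 1 / p)) := by
  set x : ℝ := (p : ℝ)⁻¹
  have hx0 : 0 ≤ x := by positivity
  have hx1 : x < 1 := inv_lt_one_of_one_lt₀ (by exact_mod_cast hp)
  have hpos (n : ℕ) : 0 < 1 - x ^ (n + 1) := sub_pos.2 (pow_lt_one₀ hx0 hx1 n.succ_ne_zero)
  have hpartial (n : ℕ) : ∑ k ∈ Finset.range n, log (1 + 1 / zval (p, k + 1)) =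
      log (1 - x ^ (n + 1)) - log (1 - x) := by
    have hterm (k : ℕ) : log (1 + 1 / zval (p, k + 1)) =
        log (1 - x ^ (k + 1 + 1)) - log (1 - x ^ (k + 1)) := by
      rw [one_add_one_div_zval hp k.succ_ne_zero, log_div (hpos _).ne' (hpos _).ne']
    simp_rw [hterm]
    rw [Finset.sum_range_sub (fun i => log (1 - x ^ (i + 1)))]
    simp
  rw [hasSum_iff_tendsto_nat_of_nonneg
    (fun k => log_nonneg (le_add_of_nonneg_right (one_div_nonneg.2 (zval_nonneg _))))]
  simp_rw [hpartial]
  have hpow : Tendsto (fun n : ℕ => x ^ (n + 1)) atTop (𝓝 0) :=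
    (tendsto_pow_atTop_nhds_zero_of_lt_one hx0 hx1).comp (tendsto_add_atTop_nat 1)
  have hlog : Tendsto (fun n : ℕ => log (1 - x ^ (n + 1))) atTop (𝓝 (log (1 - 0))) :=
    ((continuousAt_log (by norm_num : (1 : ℝ) - 0 ≠ 0)).tendsto.comp
      (tendsto_const_nhds.sub hpow) :)
  convert hlog.sub_const (log (1 - x)) using 2; simp [x]

lemma hasSum_one_div_zval_sub_log_sub_one_div_zval {p : ℕ} (hp : 1 < p) :
    HasSum (fun k => 1 / zval (p, k + 1) - log (1 + 1 / zval (p, k + 1)) - 1 / zval (p, k + 2))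
      (log (1 - 1 / p) + 1 / p) := by
  have hf : Summable fun k => 1 / zval (p, k + 1) :=
    (summable_nat_add_iff (f := fun k => 1 / zval (p, k)) 1).2 (summable_one_div_zval hp)
  have hshift :
      HasSum (fun k => 1 / zval (p, k + 2)) (∑' k, 1 / zval (p, k + 1) - 1 / p) := by
    simpa [zval_one] using (hasSum_nat_add_iff' 1).2 hf.hasSum
  have key : log (1 - 1 / p) + 1 / p =
      ∑' k, 1 / zval (p, k + 1) - -log (1 - 1 / p) - (∑' k, 1 / zval (p, k + 1) - 1 / p) := by
    ring
  rw [key]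
  exact (hf.hasSum.sub (hasSum_log_one_add_one_div_zval hp)).sub hshift

lemma sub_log_one_add_le_sq {x : ℝ} (hx : 0 ≤ x) : x - log (1 + x) ≤ x ^ 2 := by
  have h : x - x ^ 2 ≤ 2 * x / (x + 2) := by
    rw [le_div_iff₀ (by positivity)]
    nlinarith [pow_nonneg hx 3]
  linarith [le_log_one_add_of_nonneg hx]

lemma inv_pow_add_two_le {p : ℕ} (hp : 2 ≤ p) (k : ℕ) :
    (p : ℝ)⁻¹ ^ (k + 2) ≤ (p : ℝ)⁻¹ ^ 2 * 2⁻¹ ^ k := by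
  have hp' : (2 : ℝ) ≤ p := by exact_mod_cast hp
  rw [pow_add, mul_comm]
  gcongr

lemma summable_inv_sq_mul_geometric :
    Summable fun y : {p : ℕ // p.Prime} × ℕ =>
      ((y.1 : ℕ) : ℝ)⁻¹ ^ 2 * (2⁻¹ : ℝ) ^ y.2 := by
  have hsq : Summable fun p : {p : ℕ // p.Prime} => ((p : ℕ) : ℝ)⁻¹ ^ 2 := by
    refine (?_ : Summable fun n : ℕ => (n : ℝ)⁻¹ ^ 2).comp_injective Subtype.val_injective
    simp
  exact hsq.mul_of_nonneg (summable_geometric_of_lt_one (by norm_num) (by norm_num))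
    (fun _ => by positivity) (fun _ => by positivity)

lemma summable_one_div_zval_sub_log :
    Summable fun y : {p : ℕ // p.Prime} × ℕ =>
      1 / zval (y.1, y.2 + 1) - log (1 + 1 / zval (y.1, y.2 + 1)) := by
  refine .of_nonneg_of_le (fun y => ?_) (fun y => ?_) summable_inv_sq_mul_geometric
  · have := log_le_sub_one_of_pos (zero_lt_one.trans_le
      (le_add_of_nonneg_right (one_div_nonneg.2 (zval_nonneg (y.1, y.2 + 1)))))
    linarith
  · obtain ⟨⟨p, hp⟩, k⟩ := y
    have hx : (p : ℝ)⁻¹ ≤ 1 := inv_le_one_of_one_le₀ (by exact_mod_cast hp.one_le)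
    calc 1 / zval (p, k + 1) - log (1 + 1 / zval (p, k + 1))
        ≤ (1 / zval (p, k + 1)) ^ 2 := sub_log_one_add_le_sq (one_div_nonneg.2 (zval_nonneg _))
      _ ≤ ((p : ℝ)⁻¹ ^ (k + 1)) ^ 2 := by
          gcongr
          · exact one_div_nonneg.2 (zval_nonneg _)
          · exact one_div_zval_le hp.pos _
      _ ≤ (p : ℝ)⁻¹ ^ (k + 2) := by
          rw [← pow_mul]
          exact pow_le_pow_of_le_one (by positivity) hx (by omega)
      _ ≤ _ := inv_pow_add_two_le hp.two_le k

lemma summable_one_div_zval_add_two :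
    Summable fun y : {p : ℕ // p.Prime} × ℕ => 1 / zval (y.1, y.2 + 2) :=
  .of_nonneg_of_le (fun _ => one_div_nonneg.2 (zval_nonneg _))
    (fun y => (one_div_zval_le y.1.2.pos _).trans (inv_pow_add_two_le y.1.2.two_le y.2))
    summable_inv_sq_mul_geometric

def primePairsEquiv (c : ℕ) :
    {x : ℕ × ℕ // x.1.Prime ∧ c ≤ x.2} ≃ {p : ℕ // p.Prime} × ℕ where
  toFun x := (⟨x.1.1, x.2.1⟩, x.1.2 - c)
  invFun y := ⟨(y.1, y.2 + c), y.1.2, Nat.le_add_left c y.2⟩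
  left_inv := fun ⟨⟨_, _⟩, _, hk⟩ => by simp [Nat.sub_add_cancel hk]
  right_inv := fun ⟨_, _⟩ => by simp

lemma tsum_primePairs_eq (c : ℕ) (f : ℕ × ℕ → ℝ) :
    ∑' x : {x : ℕ × ℕ // x.1.Prime ∧ c ≤ x.2}, f x =
      ∑' y : {p : ℕ // p.Prime} × ℕ, f (y.1, y.2 + c) :=
  ((primePairsEquiv c).symm.tsum_eq fun x => f x.1).symm

lemma tsum_log_one_sub_one_div_add_one_div :
    ∑' p : {p : ℕ // p.Prime}, (log (1 - 1 / (p : ℝ)) + 1 / (p : ℝ)) =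
      ∑' y : {p : ℕ // p.Prime} × ℕ,
          (1 / zval (y.1, y.2 + 1) - log (1 + 1 / zval (y.1, y.2 + 1))) -
        ∑' y : {p : ℕ // p.Prime} × ℕ, 1 / zval (y.1, y.2 + 2) := by
  have hpairs := (summable_one_div_zval_sub_log.sub summable_one_div_zval_add_two).hasSum
  have hfibers (p : {p : ℕ // p.Prime}) :=
    hasSum_one_div_zval_sub_log_sub_one_div_zval p.2.one_lt
  rw [(hpairs.prod_fiberwise hfibers).tsum_eq,
    summable_one_div_zval_sub_log.tsum_sub summable_one_div_zval_add_two]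

theorem neg_W1_add_W2_eq_gamma :
    -(∑' x : {x : ℕ × ℕ // x.1.Prime ∧ 1 ≤ x.2},
        (1 / zval x.1 - Real.log (1 + 1 / zval x.1))) +
      ((Real.eulerMascheroniConstant +
          ∑' p : {p : ℕ // p.Prime}, (Real.log (1 - 1 / (p : ℝ)) + 1 / (p : ℝ))) +
        ∑' x : {x : ℕ × ℕ // x.1.Prime ∧ 2 ≤ x.2}, 1 / zval x.1) =
    Real.eulerMascheroniConstant := by
  rw [tsum_primePairs_eq 1 fun x => 1 / zval x - log (1 + 1 / zval x),
    tsum_primePairs_eq 2 fun x => 1 / zval x, tsum_log_one_sub_one_div_add_one_div]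
  ring
end

section
/- Let z ≥ 2 be an integer, K = ⌊log z / log 2⌋, and for each 2 ≤ k ≤ K let y_k be the unique positive real solution of y + y² + ⋯ + y^k = z. Then ∑_{k=1}^{K} θ(y_k) > ψ(z) − (log z)(log log z) for z sufficiently large, where y₁ = z and θ, ψ are the Chebyshev functions. -/
/-!
Mathlib's `Chebyshev.psi_eq_theta_add_sum_theta` writes `ψ z` as `∑_{k ≤ K} θ (z ^ (1/k))`.
For `y ≥ 0` we have `y + ⋯ + y ^ k < (1 + y) ^ k`, so the root `y_k` satisfies
`z ^ (1/k) - 1 < y_k`; an interval of length one contains at most one prime, so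
`θ (z ^ (1/k)) ≤ θ (y_k) + (log z) / k`. The total loss is `(H_K - 1) log z`, and since
`H_n - log n` decreases to Euler's constant, for `K ≥ 16` it is below
`(log K + log (log 2)) log z ≤ log z · log (log z)`.
-/

/-- The first Chebyshev function `θ(x) = ∑_{p ≤ x} log p`. -/
noncomputable def chebyshevTheta (x : ℝ) : ℝ :=
  ∑ p ∈ Nat.primesBelow (⌊x⌋₊ + 1), Real.log p

/-- The second Chebyshev function `ψ(x) = ∑_{n ≤ x} Λ(n)`. -/
noncomputable def chebyshevPsi (x : ℝ) : ℝ :=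
  ∑ n ∈ Finset.Icc 1 ⌊x⌋₊, ArithmeticFunction.vonMangoldt n

open Real Finset Chebyshev

theorem chebyshevTheta_eq_theta : chebyshevTheta = θ := by
  ext x
  rw [chebyshevTheta, theta_eq_sum_primesLE, Nat.primesLE]

theorem chebyshevPsi_eq_psi : chebyshevPsi = ψ := by
  ext x
  rw [chebyshevPsi, psi, ← Icc_add_one_left_eq_Ioc, zero_add]

theorem Chebyshev.theta_succ_le (m : ℕ) : θ (m + 1) ≤ θ m + log (m + 1) := by
  rw [← Nat.cast_succ, theta, theta, sum_filter, sum_filter, Nat.floor_natCast, Nat.floor_natCast,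
    sum_Ioc_succ_top m.zero_le]
  gcongr
  split_ifs <;> simp [log_nonneg]

theorem Chebyshev.theta_le_theta_add_log {x y : ℝ} (hx : 1 ≤ x) (hxy : x - 1 < y) :
    θ x ≤ θ y + log x := by
  obtain ⟨m, hm⟩ : ∃ m : ℕ, ⌊x⌋₊ = m + 1 :=
    Nat.exists_eq_add_one.mpr (Nat.floor_pos.mpr hx)
  have hfloor : ((m + 1 : ℕ) : ℝ) ≤ x := hm ▸ Nat.floor_le (by linarith)
  push_cast at hfloor
  calc θ x = θ (m + 1) := by rw [theta_eq_theta_coe_floor, hm]; push_cast; rfl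
    _ ≤ θ m + log (m + 1) := theta_succ_le m
    _ ≤ θ y + log x := add_le_add (theta_mono (by linarith)) (log_le_log (by positivity) hfloor)

theorem sum_Icc_pow_lt_one_add_pow {y : ℝ} (hy : 0 ≤ y) (k : ℕ) :
    ∑ i ∈ Icc 1 k, y ^ i < (1 + y) ^ k := by
  induction k with
  | zero => simp
  | succ k ih =>
    rw [sum_Icc_succ_top (by omega), pow_succ, pow_succ]
    have : y ^ k * y ≤ (1 + y) ^ k * y := by gcongr; linarith
    nlinarith

theorem rpow_one_div_sum_Icc_pow_sub_one_lt {y : ℝ} (hy : 0 ≤ y) {k : ℕ} (hk : 1 ≤ k) :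
    (∑ i ∈ Icc 1 k, y ^ i) ^ ((1 : ℝ) / k) - 1 < y := by
  rw [sub_lt_iff_lt_add', one_div, rpow_inv_lt_iff_of_pos (by positivity) (by positivity)
    (by positivity), rpow_natCast]
  exact sum_Icc_pow_lt_one_add_pow hy k

theorem harmonic_sub_log_le {m n : ℕ} (hm : 1 ≤ m) (hmn : m ≤ n) :
    (harmonic n : ℝ) - log n ≤ harmonic m - log m := by
  have := strictAnti_eulerMascheroniSeq'.antitone hmn
  rwa [eulerMascheroniSeq', eulerMascheroniSeq', if_neg (by omega), if_neg (by omega)] at this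

-- `H₁₆ - log 16 ≈ 0.608` and `1 + log (log 2) ≈ 0.633`; the latter needs `exp 0.39 * log 2 > 1`.
theorem harmonic_sixteen_sub_log_sixteen_lt : (harmonic 16 : ℝ) - log 16 < 1 + log (log 2) := by
  have hlog2 := log_two_gt_d9
  have hexp := quadratic_le_exp_of_nonneg (x := 0.39) (by norm_num)
  have hloglog : -0.39 < log (log 2) := by
    rw [lt_log_iff_exp_lt (by linarith), exp_neg, inv_lt_iff_one_lt_mul₀ (exp_pos _)]
    nlinarith
  have h16 : log 16 = 4 * log 2 := by
    rw [show (16 : ℝ) = 2 ^ 4 by norm_num, log_pow]; norm_num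
  rw [h16]
  norm_num [harmonic]
  linarith

theorem sum_Icc_two_inv_lt_log_log {z : ℝ} (hz : 2 ^ 16 ≤ z) :
    ∑ k ∈ Icc 2 ⌊log z / log 2⌋₊, (k : ℝ)⁻¹ < log (log z) := by
  set K := ⌊log z / log 2⌋₊
  have hlog2 : 0 < log 2 := log_pos one_lt_two
  have hlogz : 16 * log 2 ≤ log z := calc
    16 * log 2 = log (2 ^ 16) := by rw [log_pow]; norm_num
    _ ≤ log z := log_le_log (by norm_num) hz
  have hK16 : 16 ≤ K := Nat.le_floor (by rw [le_div_iff₀ hlog2]; push_cast; linarith)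
  have hKle : (K : ℝ) ≤ log z / log 2 := Nat.floor_le (div_nonneg (by linarith) hlog2.le)
  have hharmonic : (harmonic K : ℝ) = 1 + ∑ k ∈ Icc 2 K, (k : ℝ)⁻¹ := by
    rw [harmonic_eq_sum_Icc, ← insert_Icc_add_one_left_eq_Icc (by omega), sum_insert (by simp)]
    push_cast
    norm_num
  have hlogK : log K ≤ log (log z) - log (log 2) := by
    rw [← log_div (by linarith) hlog2.ne']
    exact log_le_log (by exact_mod_cast (by omega : 0 < K)) hKle
  have hmono := harmonic_sub_log_le (by norm_num) hK16
  rw [Nat.cast_ofNat] at hmono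
  linarith [harmonic_sixteen_sub_log_sixteen_lt]

theorem psi_le_sum_theta_add {z : ℝ} (hz : 2 ≤ z) {K : ℕ} (hK : ⌊log z / log 2⌋₊ ≤ K)
    {y : ℕ → ℝ} (hy1 : y 1 = z)
    (hy : ∀ k ∈ Icc 2 K, 0 ≤ y k ∧ ∑ i ∈ Icc 1 k, y k ^ i = z) :
    ψ z ≤ ∑ k ∈ Icc 1 K, θ (y k) + (∑ k ∈ Icc 2 K, (k : ℝ)⁻¹) * log z := by
  have hK1 : 1 ≤ K := hK.trans' <| Nat.le_floor <| by
    rw [le_div_iff₀ (log_pos one_lt_two), Nat.cast_one, one_mul]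
    exact log_le_log two_pos hz
  rw [psi_eq_theta_add_sum_theta' hz hK, ← insert_Icc_add_one_left_eq_Icc hK1,
    sum_insert (by simp), one_add_one_eq_two, hy1, sum_mul, add_assoc, ← sum_add_distrib]
  gcongr with k hk
  obtain ⟨hyk, hsum⟩ := hy k hk
  have hk1 : 1 ≤ k := one_le_two.trans (mem_Icc.mp hk).1
  calc θ (z ^ ((1 : ℝ) / k)) ≤ θ (y k) + log (z ^ ((1 : ℝ) / k)) :=
        theta_le_theta_add_log (one_le_rpow (by linarith) (by positivity))
          (hsum ▸ rpow_one_div_sum_Icc_pow_sub_one_lt hyk hk1)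
    _ = θ (y k) + (k : ℝ)⁻¹ * log z := by rw [log_rpow (by linarith), one_div]

theorem sum_theta_gt_psi_sub :
    ∃ z₀ : ℕ, ∀ z : ℕ, z₀ ≤ z → ∀ K : ℕ, K = ⌊Real.log z / Real.log 2⌋₊ →
      ∀ y : ℕ → ℝ, y 1 = (z : ℝ) →
        (∀ k, 2 ≤ k → k ≤ K → 0 < y k ∧ ∑ i ∈ Finset.Icc 1 k, (y k) ^ i = (z : ℝ)) →
        ∑ k ∈ Finset.Icc 1 K, chebyshevTheta (y k) >
          chebyshevPsi z - Real.log z * Real.log (Real.log z) := by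
  refine ⟨2 ^ 16, fun z hz K hK y hy1 hy => ?_⟩
  have hz16 : (2 : ℝ) ^ 16 ≤ z := by exact_mod_cast hz
  have hψ := psi_le_sum_theta_add (by linarith) hK.ge hy1 fun k hk ↦
    have ⟨hk2, hkK⟩ := mem_Icc.mp hk
    ⟨(hy k hk2 hkK).1.le, (hy k hk2 hkK).2⟩
  have hharmonic := sum_Icc_two_inv_lt_log_log hz16
  rw [← hK] at hharmonic
  have hlogz : 0 < log z := log_pos (by linarith)
  have hloss := mul_lt_mul_of_pos_right hharmonic hlogz
  rw [chebyshevPsi_eq_psi, chebyshevTheta_eq_theta]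
  linarith
end

section
/- For all x ≥ e, ∫_x^∞ √y·(log y + 1)/(y² log² y) dy exists and satisfies 2/(√x log x) − 2/(√x log² x) ≤ ∫_x^∞ (log y + 1)/(y^{3/2} log² y) dy ≤ 2/(√x log x) − 2/(√x log² x) + 8/(√x log³ x). -/
/-!
Write `L = log y`. The function `F y = 2 / (√y L²) - 2 / (√y L)` has derivative
`(L + 1) / (y^(3/2) L²) - 4 / (y^(3/2) L³)` and tends to `0` at infinity, so the integral equals
`-F x + ∫_x^∞ 4 / (y^(3/2) L³)`. The remaining integral is nonnegative and at most
`(4 / log³ x) ∫_x^∞ y^(-3/2) = 8 / (√x log³ x)`.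
-/

open MeasureTheory Real Filter Set Topology

lemma div_rpow_mul_log_pow_le_of_lt {s c x y : ℝ} (n : ℕ) (hc : 0 ≤ c) (hx : 1 < x) (hxy : x < y) :
    c / (y ^ s * log y ^ n) ≤ c / log x ^ n * y ^ (-s) := by
  have hy : 0 < y := by linarith
  have hlogx : 0 < log x := log_pos hx
  rw [rpow_neg hy.le, ← div_eq_mul_inv, div_div, mul_comm (log x ^ n)]
  gcongr

lemma integrableOn_Ioi_div_rpow_mul_log_pow {s x : ℝ} (hs : 1 < s) (n : ℕ) (c : ℝ) (hx : 1 < x) :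
    IntegrableOn (fun y => c / (y ^ s * log y ^ n)) (Ioi x) := by
  have hcont : ContinuousOn (fun y => c / (y ^ s * log y ^ n)) (Ioi x) := by
    intro y (hy : x < y)
    have hy0 : 0 < y := by linarith
    have : 0 < log y := log_pos (by linarith)
    exact ContinuousAt.continuousWithinAt
      (by fun_prop (disch := first | positivity | exact Or.inl hy0.ne'))
  refine Integrable.mono' (((integrableOn_Ioi_rpow_of_lt (neg_lt_neg hs) (by linarith)).const_mul
    (|c| / log x ^ n))) (hcont.aestronglyMeasurable measurableSet_Ioi) ?_
  filter_upwards [ae_restrict_mem measurableSet_Ioi] with y (hy : x < y)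
  have : 0 < y := by linarith
  have : 0 < log y := log_pos (by linarith)
  rw [norm_eq_abs, abs_div, abs_of_pos (by positivity : 0 < y ^ s * log y ^ n)]
  exact div_rpow_mul_log_pow_le_of_lt n (abs_nonneg c) hx hy

lemma setIntegral_Ioi_div_rpow_mul_log_pow_le {s c x : ℝ} (hs : 1 < s) (n : ℕ) (hc : 0 ≤ c)
    (hx : 1 < x) :
    ∫ y in Ioi x, c / (y ^ s * log y ^ n) ≤ c / log x ^ n * (x ^ (1 - s) / (s - 1)) := by
  have hs' : -s < -1 := neg_lt_neg hs
  have hx0 : 0 < x := by linarith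
  calc ∫ y in Ioi x, c / (y ^ s * log y ^ n)
      ≤ ∫ y in Ioi x, c / log x ^ n * y ^ (-s) :=
        setIntegral_mono_on (integrableOn_Ioi_div_rpow_mul_log_pow hs n c hx)
          ((integrableOn_Ioi_rpow_of_lt hs' hx0).const_mul _) measurableSet_Ioi
          fun y hy => div_rpow_mul_log_pow_le_of_lt n hc hx hy
    _ = c / log x ^ n * (x ^ (1 - s) / (s - 1)) := by
      rw [integral_const_mul, integral_Ioi_rpow_of_lt hs' hx0, neg_add_eq_sub, neg_div, ← div_neg,
        neg_sub]

lemma hasDerivAt_div_sqrt_mul_log_pow (c : ℝ) (n : ℕ) {y : ℝ} (hy : 1 < y) :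
    HasDerivAt (fun y => c / (√y * log y ^ n))
      (-c * (log y + 2 * n) / (2 * y ^ ((3 : ℝ) / 2) * log y ^ (n + 1))) y := by
  have hy0 : 0 < y := by linarith
  have hlog : 0 < log y := log_pos hy
  have h32 : y ^ ((3 : ℝ) / 2) = y * √y := by
    rw [show (3 : ℝ) / 2 = 1 + 1 / 2 by norm_num, rpow_add hy0, rpow_one, ← sqrt_eq_rpow]
  have hden : HasDerivAt (fun y => √y * log y ^ n)
      (1 / (2 * √y) * log y ^ n + √y * (n * log y ^ (n - 1) * y⁻¹)) y :=
    (hasDerivAt_sqrt hy0.ne').mul ((hasDerivAt_log hy0.ne').pow n)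
  refine ((hasDerivAt_const y c).div hden (by positivity)).congr_deriv ?_
  rw [h32]
  cases n with
  | zero => field_simp; rw [sq_sqrt hy0.le]; ring
  | succ n =>
    rw [Nat.add_sub_cancel]
    field_simp
    rw [sq_sqrt hy0.le]
    push_cast
    ring

lemma tendsto_div_sqrt_mul_log_pow_atTop (c : ℝ) (n : ℕ) :
    Tendsto (fun y => c / (√y * log y ^ n)) atTop (𝓝 0) := by
  have hsqrt : Tendsto (fun y : ℝ => √y) atTop atTop := by
    simpa only [sqrt_eq_rpow] using tendsto_rpow_atTop (by norm_num : (0 : ℝ) < 1 / 2)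
  refine tendsto_const_nhds.div_atTop (tendsto_atTop_mono' _ ?_ hsqrt)
  filter_upwards [eventually_ge_atTop (exp 1)] with y hy
  have hlog : 1 ≤ log y := (le_log_iff_exp_le (by linarith [exp_pos 1])).mpr hy
  exact le_mul_of_one_le_right (sqrt_nonneg y) (one_le_pow₀ hlog)

lemma integrableOn_Ioi_log_add_one_div {x : ℝ} (hx : 1 < x) :
    IntegrableOn (fun y => (log y + 1) / (y ^ ((3 : ℝ) / 2) * log y ^ 2)) (Ioi x) := by
  have h32 : (1 : ℝ) < 3 / 2 := by norm_num
  refine ((integrableOn_Ioi_div_rpow_mul_log_pow h32 1 1 hx).add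
    (integrableOn_Ioi_div_rpow_mul_log_pow h32 2 1 hx)).congr_fun (fun y (hy : x < y) => ?_)
    measurableSet_Ioi
  have : 0 < log y := log_pos (by linarith)
  simp only [Pi.add_apply]
  field_simp

lemma hasDerivAt_two_div_sqrt_mul_log_sq_sub {y : ℝ} (hy : 1 < y) :
    HasDerivAt (fun y => 2 / (√y * log y ^ 2) - 2 / (√y * log y))
      ((log y + 1) / (y ^ ((3 : ℝ) / 2) * log y ^ 2) - 4 / (y ^ ((3 : ℝ) / 2) * log y ^ 3)) y := by
  have h := (hasDerivAt_div_sqrt_mul_log_pow 2 2 hy).sub (hasDerivAt_div_sqrt_mul_log_pow 2 1 hy)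
  simp only [pow_one] at h
  refine h.congr_deriv ?_
  have : 0 < log y := log_pos hy
  field_simp
  ring

lemma setIntegral_Ioi_log_add_one_div_eq {x : ℝ} (hx : 1 < x) :
    ∫ y in Ioi x, (log y + 1) / (y ^ ((3 : ℝ) / 2) * log y ^ 2) =
      2 / (√x * log x) - 2 / (√x * log x ^ 2) +
        ∫ y in Ioi x, 4 / (y ^ ((3 : ℝ) / 2) * log y ^ 3) := by
  have hf := integrableOn_Ioi_log_add_one_div hx
  have hg := integrableOn_Ioi_div_rpow_mul_log_pow (by norm_num : (1 : ℝ) < 3 / 2) 3 4 hx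
  have hF_atTop : Tendsto (fun y => 2 / (√y * log y ^ 2) - 2 / (√y * log y)) atTop (𝓝 0) := by
    simpa using
      (tendsto_div_sqrt_mul_log_pow_atTop 2 2).sub (tendsto_div_sqrt_mul_log_pow_atTop 2 1)
  have hFTC := integral_Ioi_of_hasDerivAt_of_tendsto
    (hasDerivAt_two_div_sqrt_mul_log_sq_sub hx).continuousAt.continuousWithinAt
    (fun y (hy : x < y) => hasDerivAt_two_div_sqrt_mul_log_sq_sub (hx.trans hy)) (hf.sub hg)
    hF_atTop
  rw [integral_sub hf hg] at hFTC
  linarith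

theorem integral_bounds (x : ℝ) (hx : Real.exp 1 ≤ x) :
    IntegrableOn (fun y : ℝ => (Real.log y + 1) / (y ^ ((3 : ℝ) / 2) * (Real.log y) ^ 2))
      (Set.Ioi x) ∧
    2 / (Real.sqrt x * Real.log x) - 2 / (Real.sqrt x * (Real.log x) ^ 2) ≤
      (∫ y in Set.Ioi x, (Real.log y + 1) / (y ^ ((3 : ℝ) / 2) * (Real.log y) ^ 2)) ∧
    (∫ y in Set.Ioi x, (Real.log y + 1) / (y ^ ((3 : ℝ) / 2) * (Real.log y) ^ 2)) ≤
      2 / (Real.sqrt x * Real.log x) - 2 / (Real.sqrt x * (Real.log x) ^ 2) +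
        8 / (Real.sqrt x * (Real.log x) ^ 3) := by
  have hx1 : 1 < x := (one_lt_exp_iff.mpr one_pos).trans_le hx
  have hx0 : 0 < x := by linarith
  have hg_nonneg : 0 ≤ ∫ y in Ioi x, 4 / (y ^ ((3 : ℝ) / 2) * log y ^ 3) :=
    setIntegral_nonneg measurableSet_Ioi fun y (hy : x < y) => by
      have : 0 < y := by linarith
      have : 0 < log y := log_pos (by linarith)
      positivity
  have hg_le : ∫ y in Ioi x, 4 / (y ^ ((3 : ℝ) / 2) * log y ^ 3) ≤ 8 / (√x * log x ^ 3) := by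
    refine (setIntegral_Ioi_div_rpow_mul_log_pow_le (by norm_num) 3 (by norm_num) hx1).trans_eq ?_
    rw [show (1 : ℝ) - 3 / 2 = -(1 / 2) by norm_num, rpow_neg hx0.le, ← sqrt_eq_rpow]
    field_simp
    norm_num
  have h_eq := setIntegral_Ioi_log_add_one_div_eq hx1
  exact ⟨integrableOn_Ioi_log_add_one_div hx1, by linarith, by linarith⟩
end

section
/- For m = 9, the integer n₉ = 360360 = 2³ · 3² · 5 · 7 · 11 · 13 satisfies σ(n)/n ≤ σ(360360)/360360 = 48/11 for every positive integer n with Ω(n) = 9, where Ω counts prime factors with multiplicity. -/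
open ArithmeticFunction

namespace LRnine

/-- the i-th prime (for i < 9), else 2 -/
def P : ℕ → ℕ := fun i => [2,3,5,7,11,13,17,19,23].getD i 2

/-- g p a = σ(p^a)/p^a -/
def g (p a : ℕ) : ℚ := ∑ j ∈ Finset.range (a+1), ((p:ℚ)⁻¹) ^ j

/-- max of ∏ g over compositions; current prime index i, committed exponent b,
remaining units s -/
def B2 : ℕ → ℕ → ℕ → ℚ
  | i, b, 0 => g (P i) b
  | i, b, s+1 => max (g (P i) b * B2 (i+1) 1 s) (B2 i (b+1) s)

def B (i s : ℕ) : ℚ := match s with | 0 => 1 | s+1 => B2 i 1 s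

lemma g_nonneg (p a : ℕ) : 0 ≤ g p a :=
  Finset.sum_nonneg fun j _ => pow_nonneg (by positivity) j

lemma g_anti {p q a : ℕ} (h0 : 0 < q) (h : q ≤ p) : g p a ≤ g q a := by
  apply Finset.sum_le_sum
  intro j _
  apply pow_le_pow_left₀ (by positivity)
  apply inv_anti₀
  · exact_mod_cast h0
  · exact_mod_cast h

lemma two_le_P (i : ℕ) : 2 ≤ P i := by
  unfold P
  rcases Nat.lt_or_ge i 9 with h | h
  · interval_cases i <;> norm_num
  · rw [List.getD_eq_default _ _ (by simpa using h)]

lemma Pstep {i q : ℕ} (hq : q.Prime) (h : P i < q) : P (i + 1) ≤ q := by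
  unfold P at *
  rcases Nat.lt_or_ge i 8 with hi | hi
  · interval_cases i <;>
      · simp only [List.getD_cons_succ, List.getD_cons_zero] at h ⊢
        by_contra hc
        push_neg at hc
        interval_cases q <;> revert hq <;> decide
  · rw [List.getD_eq_default _ _ (by simp; omega)]
    exact hq.two_le

lemma step3 (c : ℕ) : ∀ i b m, g (P i) (b + c) * B (i+1) m ≤ B2 i b (c + m) := by
  induction c with
  | zero =>
    intro i b m
    cases m with
    | zero => simpa [B, B2] using le_refl (g (P i) b)
    | succ m =>
      have : (0 : ℕ) + (m+1) = m + 1 := by omega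
      rw [this]
      simp only [B, B2]
      exact le_max_left _ _
  | succ c ih =>
    intro i b m
    have h := ih i (b+1) m
    have e1 : b + (c+1) = (b+1) + c := by omega
    have e2 : (c+1) + m = (c + m) + 1 := by omega
    rw [e1, e2]
    exact le_trans h (le_max_right _ _)

lemma B_step {a m i : ℕ} (ha : 1 ≤ a) : g (P i) a * B (i+1) m ≤ B i (a + m) := by
  obtain ⟨c, rfl⟩ : ∃ c, a = 1 + c := ⟨a - 1, by omega⟩
  have h := step3 c i 1 m
  have e : (1 + c) + m = (c + m) + 1 := by omega
  rw [e]
  simpa [B] using h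

lemma main_aux : ∀ (k : ℕ) (S : Finset ℕ) (e : ℕ → ℕ) (i : ℕ),
    S.card = k → (∀ p ∈ S, p.Prime) → (∀ p ∈ S, 1 ≤ e p) → (∀ p ∈ S, P i ≤ p) →
    ∏ p ∈ S, g p (e p) ≤ B i (∑ p ∈ S, e p) := by
  intro k
  induction k with
  | zero =>
    intro S e i hc _ _ _
    rw [Finset.card_eq_zero.mp hc]
    simp [B]
  | succ k ih =>
    intro S e i hc hprime he hge
    have hne : S.Nonempty := Finset.card_pos.mp (by omega)
    set p := S.min' hne with hp
    have hpS : p ∈ S := S.min'_mem hne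
    have hrec := ih (S.erase p) e (i+1) (by rw [Finset.card_erase_of_mem hpS, hc]; omega)
      (fun q hq => hprime q (Finset.mem_of_mem_erase hq))
      (fun q hq => he q (Finset.mem_of_mem_erase hq))
      (fun q hq => by
        have hqS := Finset.mem_of_mem_erase hq
        have hne' : q ≠ p := Finset.ne_of_mem_erase hq
        have hlt : p < q := lt_of_le_of_ne (S.min'_le q hqS) (Ne.symm hne')
        exact Pstep (hprime q hqS) (lt_of_le_of_lt (hge p hpS) hlt))
    rw [← Finset.mul_prod_erase S _ hpS, ← Finset.add_sum_erase S e hpS]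
    calc g p (e p) * ∏ q ∈ S.erase p, g q (e q)
        ≤ g (P i) (e p) * B (i+1) (∑ q ∈ S.erase p, e q) := by
          apply mul_le_mul (g_anti (by have := two_le_P i; omega) (hge p hpS)) hrec
            (Finset.prod_nonneg fun q _ => g_nonneg _ _) (g_nonneg _ _)
      _ ≤ B i (e p + ∑ q ∈ S.erase p, e q) := B_step (he p hpS)

set_option maxRecDepth 100000 in
lemma B09 : B 0 9 ≤ 48/11 := by
  norm_num [B, B2, g, P, Finset.sum_range_succ]

lemma sigma_pp (p a : ℕ) (hp : 0 < p) :
    ((∑ k ∈ Finset.range (a+1), p ^ k : ℕ) : ℚ) = g p a * (p:ℚ) ^ a := by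
  have hp' : (p:ℚ) ≠ 0 := by exact_mod_cast hp.ne'
  rw [g, Finset.sum_mul]
  push_cast
  rw [← Finset.sum_range_reflect (fun k => (p:ℚ) ^ k) (a+1)]
  apply Finset.sum_congr rfl
  intro j hj
  rw [Finset.mem_range] at hj
  rw [inv_pow, inv_mul_eq_div]
  rw [show a + 1 - 1 - j = a - j from by omega]
  exact pow_sub₀ _ hp' (by omega)

lemma key (n : ℕ) (hn : 0 < n) (h9 : cardFactors n = 9) :
    ((sigma 1 n : ℕ) : ℚ) / (n : ℚ) ≤ 48 / 11 := by
  have hn' : n ≠ 0 := hn.ne'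
  have hs : ((sigma 1 n : ℕ) : ℚ)
      = ∏ p ∈ n.primeFactors, ((∑ k ∈ Finset.range (n.factorization p + 1), p ^ k : ℕ) : ℚ) := by
    rw [sigma_one_apply, Nat.sum_divisors hn']
    push_cast
    rfl
  have hnprodN : ∏ p ∈ n.primeFactors, p ^ n.factorization p = n := by
    have h1 := Nat.factorization_prod_pow_eq_self hn'
    rwa [Finsupp.prod] at h1
  have hnprod : (n : ℚ) = ∏ p ∈ n.primeFactors, (p:ℚ) ^ (n.factorization p) := by
    calc (n : ℚ) = ((∏ p ∈ n.primeFactors, p ^ n.factorization p : ℕ) : ℚ) := by rw [hnprodN]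
      _ = ∏ p ∈ n.primeFactors, (p:ℚ) ^ (n.factorization p) := by push_cast; rfl
  have hratio : ((sigma 1 n : ℕ) : ℚ) / (n : ℚ)
      = ∏ p ∈ n.primeFactors, g p (n.factorization p) := by
    rw [hs, hnprod, ← Finset.prod_div_distrib]
    apply Finset.prod_congr rfl
    intro p hp
    have hpp : p.Prime := Nat.prime_of_mem_primeFactors hp
    have hp0 : (0:ℚ) < (p:ℚ) := by exact_mod_cast hpp.pos
    have hppos : (0:ℚ) < (p:ℚ) ^ (n.factorization p) := by positivity
    rw [sigma_pp p _ hpp.pos, mul_div_assoc, div_self hppos.ne', mul_one]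
  have hΩ : ∑ p ∈ n.primeFactors, n.factorization p = 9 := by
    have h2 := Multiset.toFinsupp_sum_eq (n.primeFactorsList : Multiset ℕ)
    rw [← Nat.factorization_eq_primeFactorsList_multiset] at h2
    rw [Finsupp.sum] at h2
    simp only [Multiset.coe_card] at h2
    rw [cardFactors_apply] at h9
    rw [← h9, ← h2]
    rfl
  rw [hratio]
  calc ∏ p ∈ n.primeFactors, g p (n.factorization p)
      ≤ B 0 (∑ p ∈ n.primeFactors, n.factorization p) := by
        apply main_aux n.primeFactors.card n.primeFactors _ 0 rfl
          (fun p hp => Nat.prime_of_mem_primeFactors hp)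
          (fun p hp => (Nat.Prime.factorization_pos_of_dvd
            (Nat.prime_of_mem_primeFactors hp) hn' (Nat.dvd_of_mem_primeFactors hp)))
          (fun p hp => (Nat.prime_of_mem_primeFactors hp).two_le)
      _ = B 0 9 := by rw [hΩ]
      _ ≤ 48/11 := B09

end LRnine

theorem LR_number_nine :
    ((sigma 1 360360 : ℕ) : ℝ) / 360360 = 48 / 11 ∧
    ∀ n : ℕ, 0 < n → cardFactors n = 9 →
      ((sigma 1 n : ℕ) : ℝ) / (n : ℝ) ≤ 48 / 11 := by
  constructor
  · have h : (360360:ℕ) = 8 * (9 * (5 * (7 * (11 * 13)))) := by norm_num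
    have hs : sigma 1 360360 = 1572480 := by
      rw [h, isMultiplicative_sigma.map_mul_of_coprime (by decide),
        isMultiplicative_sigma.map_mul_of_coprime (by decide),
        isMultiplicative_sigma.map_mul_of_coprime (by decide),
        isMultiplicative_sigma.map_mul_of_coprime (by decide),
        isMultiplicative_sigma.map_mul_of_coprime (by decide)]
      decide
    rw [hs]
    norm_num
  · intro n hn h9
    have hq := LRnine.key n hn h9
    have hcast : ((sigma 1 n : ℕ) : ℝ) / (n : ℝ)
        = ((((sigma 1 n : ℕ) : ℚ) / (n : ℚ) : ℚ) : ℝ) := by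
      push_cast
      ring
    rw [hcast]
    have : ((48/11 : ℚ) : ℝ) = 48/11 := by norm_num
    rw [← this]
    exact_mod_cast hq
end
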